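/- With $w_i = \lambda_i(e_1 + \cdots + e_i)$, $\lambda_1 \ge \cdots \ge \lambda_d > 0$, the Euclidean distance from the origin to the affine hyperplane through $w_1, \dots, w_d$ is at least $\lambda_d$. -/

import Mathlib

/-!
Put `1/λ_0 := 0` and let `a` have coordinates `a_i = 1/λ_i - 1/λ_{i-1}`. The partial sums of `a`
telescope, so `⟪a, w_i⟫ = λ_i · (1/λ_i) = 1` and the affine span of the `w_i` lies in the
hyperplane `⟪a, ·⟫ = 1`, whose distance from the origin is `1/‖a‖`. As `λ` is antitone the
coordinates of `a` are nonnegative, hence `‖a‖ ≤ ∑ a_i = 1/λ_d`.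
-/

open scoped InnerProductSpace
open Finset Metric

section Hyperplane

variable {E : Type*} [NormedAddCommGroup E] [InnerProductSpace ℝ E]

theorem inner_eq_of_mem_affineSpan {a : E} {c : ℝ} {s : Set E} (hs : ∀ p ∈ s, ⟪a, p⟫_ℝ = c)
    {y : E} (hy : y ∈ affineSpan ℝ s) : ⟪a, y⟫_ℝ = c :=
  affineSpan_induction hy hs fun t u v x hu hv hx => by
    simp [inner_add_right, inner_smul_right, inner_sub_right, hu, hv, hx]

theorem le_infDist_zero_of_inner_eq_one {a : E} {s : Set E} {r : ℝ} (hs : s.Nonempty)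
    (hr : 0 < r) (ha : ‖a‖ ≤ r⁻¹) (h : ∀ y ∈ s, ⟪a, y⟫_ℝ = 1) : r ≤ infDist 0 s := by
  refine (le_infDist hs).2 fun y hy => ?_
  rw [dist_zero_left, ← one_le_inv_mul₀ hr]
  calc 1 = ⟪a, y⟫_ℝ := (h y hy).symm
    _ ≤ ‖a‖ * ‖y‖ := real_inner_le_norm a y
    _ ≤ r⁻¹ * ‖y‖ := by gcongr

end Hyperplane

theorem EuclideanSpace.norm_le_sum_of_nonneg {ι : Type*} [Fintype ι] {x : EuclideanSpace ℝ ι}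
    (hx : ∀ i, 0 ≤ x i) : ‖x‖ ≤ ∑ i, x i := by
  rw [EuclideanSpace.norm_eq, Real.sqrt_le_iff]
  refine ⟨sum_nonneg fun i _ => hx i, ?_⟩
  simpa [Real.norm_eq_abs, abs_of_nonneg (hx _)] using
    sum_sq_le_sq_sum_of_nonneg (s := univ) fun i _ => hx i

theorem Fin.sum_univ_succ_sub_castSucc {M : Type*} [AddCommGroup M] {n : ℕ}
    (g : Fin (n + 1) → M) : ∑ i : Fin n, (g i.succ - g i.castSucc) = g (last n) - g 0 := by
  rw [sum_sub_distrib, sub_eq_sub_iff_add_eq_add, add_comm, ← Fin.sum_univ_succ,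
    Fin.sum_univ_castSucc, add_comm]

section ConsecutiveDiff

variable {n : ℕ} (g : Fin (n + 1) → ℝ)

def consecutiveDiff : EuclideanSpace ℝ (Fin n) :=
  WithLp.toLp 2 fun i => g i.succ - g i.castSucc

theorem inner_consecutiveDiff_sum_Iic_single (i : Fin n) :
    ⟪consecutiveDiff g, ∑ j ∈ Iic i, EuclideanSpace.single j (1 : ℝ)⟫_ℝ = g i.succ - g 0 := by
  simp only [inner_sum, EuclideanSpace.inner_single_right, one_mul]
  exact Fin.sum_Iic_sub i g

theorem norm_consecutiveDiff_le {g} (hg : Monotone g) :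
    ‖consecutiveDiff g‖ ≤ g (Fin.last n) - g 0 := by
  rw [← Fin.sum_univ_succ_sub_castSucc]
  exact EuclideanSpace.norm_le_sum_of_nonneg fun i =>
    sub_nonneg.2 (hg (Fin.castSucc_le_succ i))

end ConsecutiveDiff

theorem stmt5 (d : ℕ) (hd : 0 < d) (l : Fin d → ℝ)
    (hmono : Antitone l) (hpos : ∀ i, 0 < l i)
    (w : Fin d → EuclideanSpace ℝ (Fin d))
    (hw : ∀ i, w i = ∑ j ∈ Finset.Iic i, l i • EuclideanSpace.single j (1 : ℝ)) :
    l ⟨d - 1, by omega⟩ ≤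
      Metric.infDist (0 : EuclideanSpace ℝ (Fin d))
        (affineSpan ℝ (Set.range w) : Set (EuclideanSpace ℝ (Fin d))) := by
  obtain ⟨n, rfl⟩ := Nat.exists_eq_add_one_of_ne_zero hd.ne'
  change l (Fin.last n) ≤ _
  set g : Fin (n + 2) → ℝ := Matrix.vecCons 0 fun i => (l i)⁻¹
  have hg : Monotone g :=
    Monotone.vecCons (fun i j hij => inv_anti₀ (hpos j) (hmono hij)) (inv_nonneg.2 (hpos 0).le)
  have hw_inner (i : Fin (n + 1)) : ⟪consecutiveDiff g, w i⟫_ℝ = 1 := by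
    rw [hw i, ← smul_sum, inner_smul_right, inner_consecutiveDiff_sum_Iic_single]
    simp [g, (hpos i).ne']
  have h_span : ∀ y ∈ (affineSpan ℝ (Set.range w) : Set (EuclideanSpace ℝ (Fin (n + 1)))),
      ⟪consecutiveDiff g, y⟫_ℝ = 1 :=
    fun y hy => inner_eq_of_mem_affineSpan (Set.forall_mem_range.2 hw_inner) hy
  have h_norm : ‖consecutiveDiff g‖ ≤ (l (Fin.last n))⁻¹ := by
    simpa [g, ← Fin.succ_last] using norm_consecutiveDiff_le hg
  exact le_infDist_zero_of_inner_eq_one ((Set.range_nonempty w).mono (subset_affineSpan ℝ _))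
    (hpos _) h_norm h_span
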